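/- arXiv:2411.06210 — 6 statements merged into one kernel-verified Lean document; each statement's English description precedes it below -/
import Mathlib

section
/- The category 2-Grpd(C) of internal 2-groupoids is closed under regular quotients in Grpd²(C): if f : ℂ → 𝔻 is a levelwise regular epimorphism of double groupoids in a regular category C and ℂ is a 2-groupoid, then 𝔻 is a 2-groupoid. -/
open CategoryTheory CategoryTheory.Limits

universe v u v' u'

variable {C : Type u} [Category.{v} C]

/-- An internal relation on an object `X`: a pair of jointly monic morphisms. -/
structure RelOn (X : C) where
  R : C
  r1 : R ⟶ X
  r2 : R ⟶ X
  jmono : ∀ {Z : C} (f g : Z ⟶ R), f ≫ r1 = g ≫ r1 → f ≫ r2 = g ≫ r2 → f = g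

namespace RelOn

variable {X : C} (ρ : RelOn X)

def Reflexive : Prop :=
  ∃ δ : X ⟶ ρ.R, δ ≫ ρ.r1 = 𝟙 X ∧ δ ≫ ρ.r2 = 𝟙 X

def Symmetric : Prop :=
  ∃ σ : ρ.R ⟶ ρ.R, σ ≫ ρ.r1 = ρ.r2 ∧ σ ≫ ρ.r2 = ρ.r1

/-- Transitivity, formulated with generalized elements. -/
def Transitive : Prop :=
  ∀ {Z : C} (a b : Z ⟶ ρ.R), a ≫ ρ.r2 = b ≫ ρ.r1 →
    ∃ t : Z ⟶ ρ.R, t ≫ ρ.r1 = a ≫ ρ.r1 ∧ t ≫ ρ.r2 = b ≫ ρ.r2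

def IsEquivalence : Prop := ρ.Reflexive ∧ ρ.Symmetric ∧ ρ.Transitive

/-- The relation is effective: it is the kernel pair of some morphism. -/
def Effective : Prop :=
  ∃ (Y : C) (f : X ⟶ Y) (h : ρ.r1 ≫ f = ρ.r2 ≫ f),
    Nonempty (IsLimit (PullbackCone.mk ρ.r1 ρ.r2 h))

end RelOn

/-- A Mal'tsev category: every internal reflexive relation is an equivalence relation. -/
class MaltsevCat (C : Type u) [Category.{v} C] : Prop where
  refl_is_equiv : ∀ {X : C} (ρ : RelOn X), ρ.Reflexive → ρ.Symmetric ∧ ρ.Transitive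

/-- A regular category: finitely complete, coequalizers of kernel pairs,
pullback-stable regular epimorphisms. -/
class RegularCat (C : Type u) [Category.{v} C] : Prop where
  hasFiniteLimits : HasFiniteLimits C
  hasCoeqOfKernelPair : ∀ {A B R : C} (f : A ⟶ B) (p1 p2 : R ⟶ A) (h : p1 ≫ f = p2 ≫ f),
    Nonempty (IsLimit (PullbackCone.mk p1 p2 h)) → HasCoequalizer p1 p2
  regEpiStable : ∀ {P A B Z : C} (f : A ⟶ B) (g : Z ⟶ B) (p1 : P ⟶ A) (p2 : P ⟶ Z)
    (h : p1 ≫ f = p2 ≫ g), Nonempty (IsLimit (PullbackCone.mk p1 p2 h)) →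
    Nonempty (RegularEpi f) → Nonempty (RegularEpi p2)

/-- A Barr-exact category: regular and every equivalence relation is effective. -/
class ExactCat (C : Type u) [Category.{v} C] extends RegularCat C : Prop where
  effective : ∀ {X : C} (ρ : RelOn X), ρ.IsEquivalence → ρ.Effective

/-- An internal reflexive graph. -/
structure ReflexiveGraph (C : Type u) [Category.{v} C] where
  C1 : C
  C0 : C
  d : C1 ⟶ C0
  c : C1 ⟶ C0
  e : C0 ⟶ C1
  ed : e ≫ d = 𝟙 C0
  ec : e ≫ c = 𝟙 C0

/-- An internal category structure on a reflexive graph, formulated via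
generalized elements (equivalent to the usual pullback formulation in a
finitely complete category). `comp a b _` is the composite "`a` followed by `b`". -/
structure CatStruct {C : Type u} [Category.{v} C] (G : ReflexiveGraph C) where
  comp : ∀ {Z : C} (a b : Z ⟶ G.C1), a ≫ G.c = b ≫ G.d → (Z ⟶ G.C1)
  comp_natural : ∀ {W Z : C} (w : W ⟶ Z) (a b : Z ⟶ G.C1) (h : a ≫ G.c = b ≫ G.d)
      (h' : (w ≫ a) ≫ G.c = (w ≫ b) ≫ G.d),
      w ≫ comp a b h = comp (w ≫ a) (w ≫ b) h'
  comp_d : ∀ {Z : C} (a b : Z ⟶ G.C1) (h : a ≫ G.c = b ≫ G.d), comp a b h ≫ G.d = a ≫ G.d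
  comp_c : ∀ {Z : C} (a b : Z ⟶ G.C1) (h : a ≫ G.c = b ≫ G.d), comp a b h ≫ G.c = b ≫ G.c
  comp_unit_l : ∀ {Z : C} (a : Z ⟶ G.C1) (h : (a ≫ G.d ≫ G.e) ≫ G.c = a ≫ G.d),
      comp (a ≫ G.d ≫ G.e) a h = a
  comp_unit_r : ∀ {Z : C} (a : Z ⟶ G.C1) (h : a ≫ G.c = (a ≫ G.c ≫ G.e) ≫ G.d),
      comp a (a ≫ G.c ≫ G.e) h = a
  comp_assoc : ∀ {Z : C} (a b c' : Z ⟶ G.C1) (h1 : a ≫ G.c = b ≫ G.d)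
      (h2 : b ≫ G.c = c' ≫ G.d)
      (h3 : comp a b h1 ≫ G.c = c' ≫ G.d)
      (h4 : a ≫ G.c = comp b c' h2 ≫ G.d),
      comp (comp a b h1) c' h3 = comp a (comp b c' h2) h4

/-- The internal category has inverses, i.e. is an internal groupoid. -/
def CatStruct.HasInverses {C : Type u} [Category.{v} C] {G : ReflexiveGraph C}
    (S : CatStruct G) : Prop :=
  ∃ i : G.C1 ⟶ G.C1, i ≫ G.d = G.c ∧ i ≫ G.c = G.d ∧
    (∀ {Z : C} (a : Z ⟶ G.C1) (h : a ≫ G.c = (a ≫ i) ≫ G.d),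
      S.comp a (a ≫ i) h = a ≫ G.d ≫ G.e) ∧
    (∀ {Z : C} (a : Z ⟶ G.C1) (h : (a ≫ i) ≫ G.c = a ≫ G.d),
      S.comp (a ≫ i) a h = a ≫ G.c ≫ G.e)

/-- An internal groupoid. -/
structure GroupoidObj (C : Type u) [Category.{v} C] where
  graph : ReflexiveGraph C
  str : CatStruct graph
  hasInv : str.HasInverses

/-- Internal functors between internal groupoids. -/
@[ext]
structure GrpdHom (A B : GroupoidObj C) where
  f0 : A.graph.C0 ⟶ B.graph.C0
  f1 : A.graph.C1 ⟶ B.graph.C1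
  hd : f1 ≫ B.graph.d = A.graph.d ≫ f0
  hc : f1 ≫ B.graph.c = A.graph.c ≫ f0
  he : A.graph.e ≫ f1 = f0 ≫ B.graph.e
  hm : ∀ {Z : C} (a b : Z ⟶ A.graph.C1) (h : a ≫ A.graph.c = b ≫ A.graph.d)
      (h' : (a ≫ f1) ≫ B.graph.c = (b ≫ f1) ≫ B.graph.d),
      A.str.comp a b h ≫ f1 = B.str.comp (a ≫ f1) (b ≫ f1) h'

lemma GrpdHom.cond {A B : GroupoidObj C} (f : GrpdHom A B) {Z : C} {a b : Z ⟶ A.graph.C1}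
    (h : a ≫ A.graph.c = b ≫ A.graph.d) :
    (a ≫ f.f1) ≫ B.graph.c = (b ≫ f.f1) ≫ B.graph.d := by
  rw [Category.assoc, f.hc, Category.assoc, f.hd, ← Category.assoc, h, Category.assoc]

def GrpdHom.id (A : GroupoidObj C) : GrpdHom A A where
  f0 := 𝟙 _
  f1 := 𝟙 _
  hd := by simp
  hc := by simp
  he := by simp
  hm := by intros; simp

def GrpdHom.comp {A B D : GroupoidObj C} (f : GrpdHom A B) (g : GrpdHom B D) : GrpdHom A D where
  f0 := f.f0 ≫ g.f0
  f1 := f.f1 ≫ g.f1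
  hd := by rw [Category.assoc, g.hd, ← Category.assoc, f.hd, Category.assoc]
  hc := by rw [Category.assoc, g.hc, ← Category.assoc, f.hc, Category.assoc]
  he := by rw [← Category.assoc, f.he, Category.assoc, g.he, ← Category.assoc]
  hm := by
    intro Z a b h h'
    rw [← Category.assoc, f.hm a b h (f.cond h), g.hm _ _ (f.cond h) (g.cond (f.cond h))]
    simp only [Category.assoc]

instance : Category (GroupoidObj C) where
  Hom := GrpdHom
  id := GrpdHom.id
  comp := GrpdHom.comp
  id_comp f := by apply GrpdHom.ext <;> simp [GrpdHom.comp, GrpdHom.id]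
  comp_id f := by apply GrpdHom.ext <;> simp [GrpdHom.comp, GrpdHom.id]
  assoc f g h := by apply GrpdHom.ext <;> simp [GrpdHom.comp]

/-- Coerce a morphism of internal groupoids to its underlying data. -/
def homToGrpdHom {A B : GroupoidObj C} (f : A ⟶ B) : GrpdHom A B := f

/-- Morphisms of reflexive graphs. -/
@[ext]
structure RGHom (A B : ReflexiveGraph C) where
  f0 : A.C0 ⟶ B.C0
  f1 : A.C1 ⟶ B.C1
  hd : f1 ≫ B.d = A.d ≫ f0
  hc : f1 ≫ B.c = A.c ≫ f0
  he : A.e ≫ f1 = f0 ≫ B.e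

instance : Category (ReflexiveGraph C) where
  Hom := RGHom
  id A := ⟨𝟙 _, 𝟙 _, by simp, by simp, by simp⟩
  comp f g := ⟨f.f0 ≫ g.f0, f.f1 ≫ g.f1,
    by rw [Category.assoc, g.hd, ← Category.assoc, f.hd, Category.assoc],
    by rw [Category.assoc, g.hc, ← Category.assoc, f.hc, Category.assoc],
    by rw [← Category.assoc, f.he, Category.assoc, g.he, ← Category.assoc]⟩
  id_comp f := by apply RGHom.ext <;> simp
  comp_id f := by apply RGHom.ext <;> simp
  assoc f g h := by apply RGHom.ext <;> simp

def homToRGHom {A B : ReflexiveGraph C} (f : A ⟶ B) : RGHom A B := f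

/-- The forgetful functor from internal groupoids to reflexive graphs. -/
def forgetToRG (C : Type u) [Category.{v} C] : GroupoidObj C ⥤ ReflexiveGraph C where
  obj A := A.graph
  map f := ⟨(homToGrpdHom f).f0, (homToGrpdHom f).f1, (homToGrpdHom f).hd,
    (homToGrpdHom f).hc, (homToGrpdHom f).he⟩
  map_id A := by apply RGHom.ext <;> rfl
  map_comp f g := by apply RGHom.ext <;> rfl

/-- A discrete internal groupoid: the unit is an isomorphism. -/
def GroupoidObj.IsDiscrete (A : GroupoidObj C) : Prop := IsIso A.graph.e

/-- An internal double groupoid (an internal groupoid in internal groupoids) is a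
2-groupoid when its groupoid of objects is discrete. -/
def Is2Grpd (D : GroupoidObj (GroupoidObj C)) : Prop := D.graph.C0.IsDiscrete

/-- Zero morphisms, defined without extra structure: morphisms factoring through a
zero object. -/
def IsZeroMor {A B : C} (f : A ⟶ B) : Prop :=
  ∃ (Z : C) (_ : IsZero Z) (g : A ⟶ Z) (h : Z ⟶ B), f = g ≫ h

/-- `κ` is a kernel of `α`. -/
def IsKernelOf {A B K : C} (κ : K ⟶ A) (α : A ⟶ B) : Prop :=
  IsZeroMor (κ ≫ α) ∧ ∀ {Z : C} (g : Z ⟶ A), IsZeroMor (g ≫ α) → ∃! l : Z ⟶ K, l ≫ κ = g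

/-- A split extension with kernel object `Xo`. -/
structure SplitExtOn (Xo : C) where
  A : C
  B : C
  κ : Xo ⟶ A
  α : A ⟶ B
  β : B ⟶ A
  split : β ≫ α = 𝟙 B
  ker : IsKernelOf κ α

/-- A generic split extension with kernel `Xo`: terminal among split extensions
with kernel `Xo` (morphisms being the identity on the kernel). -/
def IsGenericSplitExt {Xo : C} (E : SplitExtOn Xo) : Prop :=
  ∀ E' : SplitExtOn Xo, ∃! vw : (E'.A ⟶ E.A) × (E'.B ⟶ E.B),
    E'.κ ≫ vw.1 = E.κ ∧ vw.1 ≫ E.α = E'.α ≫ vw.2 ∧ E'.β ≫ vw.1 = vw.2 ≫ E.β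

/-- Action representability: every object admits a generic split extension. -/
def ActionRepresentable (C : Type u) [Category.{v} C] : Prop :=
  ∀ X : C, ∃ E : SplitExtOn X, IsGenericSplitExt E

/-- A protoadditive functor: preserves kernels of split epimorphisms. -/
def Protoadditive {X : Type u'} [Category.{v'} X] (H : X ⥤ C) : Prop :=
  ∀ {A B K : X} (α : A ⟶ B) (β : B ⟶ A), β ≫ α = 𝟙 B →
    ∀ (κ : K ⟶ A), IsKernelOf κ α → IsKernelOf (H.map κ) (H.map α)

/-- A semi-abelian category: pointed, Barr-exact, protomodular (split short five
lemma), with binary coproducts. -/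
class SemiAbelian (C : Type u) [Category.{v} C] extends ExactCat C : Prop where
  hasZeroObject : HasZeroObject C
  hasBinaryCoproducts : HasBinaryCoproducts C
  ssfl : ∀ {A B B' Co : C} (k : A ⟶ B) (p : B ⟶ Co) (s : Co ⟶ B)
      (k' : A ⟶ B') (p' : B' ⟶ Co) (s' : Co ⟶ B') (b : B ⟶ B'),
      s ≫ p = 𝟙 Co → s' ≫ p' = 𝟙 Co → IsKernelOf k p → IsKernelOf k' p' →
      k ≫ b = k' → b ≫ p' = p → s ≫ b = s' → IsIso b

/-- A natural Mal'tsev operation on a category with binary products. -/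
def IsNaturallyMaltsev (C : Type u) [Category.{v} C] [HasBinaryProducts C] : Prop :=
  ∃ p : ∀ A : C, (A ⨯ A) ⨯ A ⟶ A,
    (∀ {A B : C} (f : A ⟶ B), prod.map (prod.map f f) f ≫ p B = p A ≫ f) ∧
    (∀ A : C, prod.lift (prod.lift prod.fst prod.snd) prod.snd ≫ p A
        = (prod.fst : A ⨯ A ⟶ A)) ∧
    (∀ A : C, prod.lift (prod.lift prod.fst prod.fst) prod.snd ≫ p A
        = (prod.snd : A ⨯ A ⟶ A))

/-- 2-groupoids are closed under levelwise regular quotients among double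
groupoids in a regular category. -/
theorem stmt11 {C : Type u} [Category.{v} C] [RegularCat C]
    (A B : GroupoidObj (GroupoidObj C)) (f : A ⟶ B)
    (h00 : Nonempty (RegularEpi (homToGrpdHom ((homToGrpdHom f).f0)).f0))
    (h01 : Nonempty (RegularEpi (homToGrpdHom ((homToGrpdHom f).f0)).f1))
    (h10 : Nonempty (RegularEpi (homToGrpdHom ((homToGrpdHom f).f1)).f0))
    (h11 : Nonempty (RegularEpi (homToGrpdHom ((homToGrpdHom f).f1)).f1))
    (hA : Is2Grpd A) : Is2Grpd B := by
  obtain ⟨re⟩ := h01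
  set g := homToGrpdHom ((homToGrpdHom f).f0)
  have hEpi : Epi g.f1 := @RegularEpi.epi _ _ _ _ _ re
  have hIso : IsIso A.graph.C0.graph.e := hA
  have hcomp : Epi (g.f0 ≫ B.graph.C0.graph.e) := by
    rw [← g.he]
    exact epi_comp _ _
  have heEpi : Epi B.graph.C0.graph.e := epi_of_epi g.f0 _
  have : B.graph.C0.graph.e ≫ (B.graph.C0.graph.d ≫ B.graph.C0.graph.e)
      = B.graph.C0.graph.e ≫ 𝟙 _ := by
    rw [← Category.assoc, B.graph.C0.graph.ed, Category.id_comp, Category.comp_id]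
  have hde : B.graph.C0.graph.d ≫ B.graph.C0.graph.e = 𝟙 _ :=
    (cancel_epi B.graph.C0.graph.e).mp this
  exact ⟨B.graph.C0.graph.d, B.graph.C0.graph.ed, hde⟩
end

section
/- A category C with finite products is naturally Mal'tsev if and only if the forgetful functor from internal groupoids in C to reflexive graphs in C is an isomorphism of categories; in particular, in a naturally Mal'tsev category every reflexive graph carries a unique internal groupoid structure. -/
open CategoryTheory CategoryTheory.Limits

universe v u v' u'

variable {C : Type u} [Category.{v} C]

/-!
Given a natural Mal'tsev operation `p`, the composite of `a` and `b` in any internal category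
is forced to be `p(a, e(c a), b)`: in the pullback `C₁ ×_{C₀} C₁` one has
`(a, b) = p((a, e(c a)), (e(c a), e(c a)), (e(c a), b))`, and naturality of `p` with respect to
the composition map sends this to `p(a, e(c a), b)` by the unit laws. Conversely, this formula
defines an internal groupoid on every reflexive graph, with inverse `p(e(d a), a, e(c a))`,
and every morphism of reflexive graphs preserves it. Hence the forgetful functor is bijective
on objects and on morphisms.

In the other direction, regard `A ⨯ A` as the reflexive graph `loopGraph.obj A` whose arrows
`(x, y)` are loops at `x`. A groupoid structure on it is a family of group structures on `A`,
the one at `y` having unit `y`, and `p(x, y, z)`, the product of `x` and `z` in the group with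
unit `y`, is a Mal'tsev operation; it is natural when the groupoid structures come from a
functorial section of the forgetful functor.
-/

attribute [local simp] prod.lift_fst prod.lift_snd prod.lift_fst_assoc prod.lift_snd_assoc
  pullback.lift_fst pullback.lift_snd

structure NaturalMaltsevOp (C : Type u) [Category.{v} C] [HasBinaryProducts C] where
  p : ∀ A : C, (A ⨯ A) ⨯ A ⟶ A
  naturality : ∀ {A B : C} (f : A ⟶ B), prod.map (prod.map f f) f ≫ p B = p A ≫ f
  self_right : ∀ A : C, prod.lift (prod.lift prod.fst prod.snd) prod.snd ≫ p A
    = (prod.fst : A ⨯ A ⟶ A)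
  self_left : ∀ A : C, prod.lift (prod.lift prod.fst prod.fst) prod.snd ≫ p A
    = (prod.snd : A ⨯ A ⟶ A)

lemma isNaturallyMaltsev_iff_nonempty [HasBinaryProducts C] :
    IsNaturallyMaltsev C ↔ Nonempty (NaturalMaltsevOp C) :=
  ⟨fun ⟨p, hnat, h₁, h₂⟩ => ⟨⟨p, hnat, h₁, h₂⟩⟩,
    fun ⟨M⟩ => ⟨M.p, M.naturality, M.self_right, M.self_left⟩⟩

namespace NaturalMaltsevOp

variable [HasBinaryProducts C] (M : NaturalMaltsevOp C)

noncomputable def op {Z A : C} (x y z : Z ⟶ A) : Z ⟶ A :=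
  prod.lift (prod.lift x y) z ≫ M.p A

@[simp]
lemma comp_op {W Z A : C} (w : W ⟶ Z) (x y z : Z ⟶ A) :
    w ≫ M.op x y z = M.op (w ≫ x) (w ≫ y) (w ≫ z) := by
  simp [op, ← Category.assoc]

lemma op_comp {Z A B : C} (x y z : Z ⟶ A) (f : A ⟶ B) :
    M.op x y z ≫ f = M.op (x ≫ f) (y ≫ f) (z ≫ f) := by
  simp [op, ← M.naturality]

@[simp]
lemma op_self_right {Z A : C} (x y : Z ⟶ A) : M.op x y y = x := by
  simpa [op, ← Category.assoc] using prod.lift x y ≫= M.self_right A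

@[simp]
lemma op_self_left {Z A : C} (x y : Z ⟶ A) : M.op x x y = y := by
  simpa [op, ← Category.assoc] using prod.lift x y ≫= M.self_left A

lemma op_prodLift {Z A B : C} (x y z : Z ⟶ A) (x' y' z' : Z ⟶ B) :
    M.op (prod.lift x x') (prod.lift y y') (prod.lift z z')
      = prod.lift (M.op x y z) (M.op x' y' z') := by
  ext <;> simp [op_comp]

/-- This is naturality of `p` with respect to the morphism `p A` itself. -/
lemma op_op_op {Z A : C} (a b c d e f g h i : Z ⟶ A) :
    M.op (M.op a b c) (M.op d e f) (M.op g h i)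
      = M.op (M.op a d g) (M.op b e h) (M.op c f i) := by
  have := M.op_comp (prod.lift (prod.lift a b) c) (prod.lift (prod.lift d e) f)
    (prod.lift (prod.lift g h) i) (M.p A)
  rw [op_prodLift, op_prodLift] at this
  exact this.symm

lemma op_assoc {Z A : C} (x y z u v : Z ⟶ A) :
    M.op (M.op x y z) u v = M.op x y (M.op z u v) := by
  simpa using (M.op_op_op x y y y y y z u v).symm

end NaturalMaltsevOp

namespace ReflexiveGraph

attribute [simp] ed ec

variable (G : ReflexiveGraph C)

@[simp]
lemma ed_assoc {X : C} (f : G.C0 ⟶ X) : G.e ≫ G.d ≫ f = f := by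
  rw [← Category.assoc, G.ed, Category.id_comp]

@[simp]
lemma ec_assoc {X : C} (f : G.C0 ⟶ X) : G.e ≫ G.c ≫ f = f := by
  rw [← Category.assoc, G.ec, Category.id_comp]

end ReflexiveGraph

namespace RGHom

variable {G H : ReflexiveGraph C} (r : RGHom G H)

lemma c_e_comp : G.c ≫ G.e ≫ r.f1 = r.f1 ≫ H.c ≫ H.e := by
  rw [r.he, ← Category.assoc, ← r.hc, Category.assoc]

lemma d_e_comp : G.d ≫ G.e ≫ r.f1 = r.f1 ≫ H.d ≫ H.e := by
  rw [r.he, ← Category.assoc, ← r.hd, Category.assoc]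

end RGHom

attribute [ext] CatStruct

namespace CatStruct

variable {G : ReflexiveGraph C} (S : CatStruct G)

lemma precomp_comp {W Z : C} (w : W ⟶ Z) (a b : Z ⟶ G.C1) (h : a ≫ G.c = b ≫ G.d) :
    w ≫ S.comp a b h = S.comp (w ≫ a) (w ≫ b) (by simp only [Category.assoc, h]) :=
  S.comp_natural w a b h _

lemma comp_of_eq_right {Z : C} (a b : Z ⟶ G.C1) (hb : b = a ≫ G.c ≫ G.e)
    (h : a ≫ G.c = b ≫ G.d) : S.comp a b h = a := by
  subst hb
  exact S.comp_unit_r a h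

lemma comp_of_eq_left {Z : C} (a b : Z ⟶ G.C1) (ha : a = b ≫ G.d ≫ G.e)
    (h : a ≫ G.c = b ≫ G.d) : S.comp a b h = b := by
  subst ha
  exact S.comp_unit_l b h

lemma comp_eq_lift_comp [HasPullbacks C] {Z : C} (a b : Z ⟶ G.C1) (h : a ≫ G.c = b ≫ G.d) :
    S.comp a b h = pullback.lift a b h ≫ S.comp _ _ pullback.condition := by
  simp only [precomp_comp, pullback.lift_fst, pullback.lift_snd]

end CatStruct

namespace NaturalMaltsevOp

variable [HasBinaryProducts C] (M : NaturalMaltsevOp C)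

lemma comp_eq_op [HasPullbacks C] {G : ReflexiveGraph C} (S : CatStruct G) {Z : C}
    (a b : Z ⟶ G.C1) (h : a ≫ G.c = b ≫ G.d) :
    S.comp a b h = M.op a (a ≫ G.c ≫ G.e) b := by
  set u := a ≫ G.c ≫ G.e
  have hau : a ≫ G.c = u ≫ G.d := by simp [u]
  have huu : u ≫ G.c = u ≫ G.d := by simp [u]
  have hub : u ≫ G.c = b ≫ G.d := by simp [u, h]
  have hlift : pullback.lift a b h
      = M.op (pullback.lift a u hau) (pullback.lift u u huu) (pullback.lift u b hub) := by
    apply pullback.hom_ext <;> simp [op_comp]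
  rw [S.comp_eq_lift_comp, hlift, op_comp, ← S.comp_eq_lift_comp, ← S.comp_eq_lift_comp,
    ← S.comp_eq_lift_comp, S.comp_of_eq_right a u rfl, S.comp_of_eq_left u u (by simp [u]),
    S.comp_of_eq_left u b (by simp [u, reassoc_of% h])]

@[simps]
noncomputable def catStruct (G : ReflexiveGraph C) : CatStruct G where
  comp a b _ := M.op a (a ≫ G.c ≫ G.e) b
  comp_natural _ _ _ _ _ := by simp
  comp_d a b h := by simp [op_comp, ← h]
  comp_c _ _ _ := by simp [op_comp]
  comp_unit_l _ _ := by simp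
  comp_unit_r _ _ := M.op_self_right _ _
  comp_assoc _ _ _ _ _ _ _ := by simp [op_comp, op_assoc]

lemma catStruct_hasInverses (G : ReflexiveGraph C) : (M.catStruct G).HasInverses := by
  refine ⟨M.op (G.d ≫ G.e) (𝟙 _) (G.c ≫ G.e), by simp [op_comp], by simp [op_comp],
    fun a _ => ?_, fun a _ => ?_⟩
  · simpa using
      (M.op_op_op a a (a ≫ G.d ≫ G.e) a a a a (a ≫ G.c ≫ G.e) (a ≫ G.c ≫ G.e)).symm
  · simpa [op_comp] using
      M.op_op_op (a ≫ G.d ≫ G.e) a (a ≫ G.c ≫ G.e) (a ≫ G.d ≫ G.e) a a a a a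

noncomputable def toGroupoid : ReflexiveGraph C ⥤ GroupoidObj C where
  obj G := ⟨G, M.catStruct G, M.catStruct_hasInverses G⟩
  map r :=
    { f0 := RGHom.f0 r
      f1 := RGHom.f1 r
      hd := RGHom.hd r
      hc := RGHom.hc r
      he := RGHom.he r
      hm := fun _ _ _ _ => by simp [op_comp, RGHom.c_e_comp] }
  map_id _ := rfl
  map_comp _ _ := rfl

lemma toGroupoid_comp_forget : M.toGroupoid ⋙ forgetToRG C = 𝟭 _ := rfl

section

variable [HasPullbacks C]

lemma eq_catStruct {G : ReflexiveGraph C} (S : CatStruct G) : S = M.catStruct G := by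
  ext Z a b h
  exact M.comp_eq_op S a b h

lemma forget_comp_toGroupoid : forgetToRG C ⋙ M.toGroupoid = 𝟭 _ := by
  refine Functor.hext (fun ⟨G, S, _⟩ => by obtain rfl := M.eq_catStruct S; rfl) ?_
  rintro ⟨G, S, _⟩ ⟨G', S', _⟩ f
  obtain rfl := M.eq_catStruct S
  obtain rfl := M.eq_catStruct S'
  rfl

lemma existsUnique_catStruct (M : NaturalMaltsevOp C) (G : ReflexiveGraph C) :
    ∃! S : CatStruct G, S.HasInverses :=
  ⟨M.catStruct G, M.catStruct_hasInverses G, fun S _ => M.eq_catStruct S⟩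

end

end NaturalMaltsevOp

namespace GroupoidObj

variable (D : GroupoidObj C) {G : ReflexiveGraph C} (t : RGHom G D.graph) (o : RGHom D.graph G)

lemma retract_cond {Z : C} {a b : Z ⟶ G.C1} (h : a ≫ G.c = b ≫ G.d) :
    (a ≫ t.f1) ≫ D.graph.c = (b ≫ t.f1) ≫ D.graph.d := by
  simp only [Category.assoc, RGHom.hc, RGHom.hd, reassoc_of% h]

noncomputable def retractComp {Z : C} (a b : Z ⟶ G.C1) (h : a ≫ G.c = b ≫ G.d) : Z ⟶ G.C1 :=
  D.str.comp _ _ (D.retract_cond t h) ≫ o.f1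

lemma precomp_retractComp {W Z : C} (w : W ⟶ Z) (a b : Z ⟶ G.C1) (h : a ≫ G.c = b ≫ G.d) :
    w ≫ D.retractComp t o a b h
      = D.retractComp t o (w ≫ a) (w ≫ b) (by simp only [Category.assoc, h]) := by
  simp only [retractComp, ← Category.assoc, CatStruct.precomp_comp]

variable {D t o}

lemma retractComp_of_eq_right (hto : t.f1 ≫ o.f1 = 𝟙 G.C1) {Z : C} (a b : Z ⟶ G.C1)
    (hb : b = a ≫ G.c ≫ G.e) (h : a ≫ G.c = b ≫ G.d) :
    D.retractComp t o a b h = a := by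
  rw [retractComp, D.str.comp_of_eq_right _ _ (by simp only [hb, Category.assoc, t.c_e_comp]),
    Category.assoc, hto, Category.comp_id]

lemma retractComp_of_eq_left (hto : t.f1 ≫ o.f1 = 𝟙 G.C1) {Z : C} (a b : Z ⟶ G.C1)
    (ha : a = b ≫ G.d ≫ G.e) (h : a ≫ G.c = b ≫ G.d) :
    D.retractComp t o a b h = b := by
  rw [retractComp, D.str.comp_of_eq_left _ _ (by simp only [ha, Category.assoc, t.d_e_comp]),
    Category.assoc, hto, Category.comp_id]

lemma retractComp_map {D' : GroupoidObj C} {G' : ReflexiveGraph C} {t' : RGHom G' D'.graph}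
    {o' : RGHom D'.graph G'} (u : GrpdHom D D') (r : RGHom G G')
    (ht : t.f1 ≫ u.f1 = r.f1 ≫ t'.f1) (ho : u.f1 ≫ o'.f1 = o.f1 ≫ r.f1)
    {Z : C} (a b : Z ⟶ G.C1) (h : a ≫ G.c = b ≫ G.d) :
    D.retractComp t o a b h ≫ r.f1
      = D'.retractComp t' o' (a ≫ r.f1) (b ≫ r.f1)
          (by simp only [Category.assoc, r.hc, r.hd, reassoc_of% h]) := by
  rw [retractComp, retractComp, Category.assoc, ← ho, ← Category.assoc,
    u.hm _ _ (D.retract_cond t h) (u.cond (D.retract_cond t h))]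
  simp only [Category.assoc, ht]

end GroupoidObj

section SectionComp

variable (V : ReflexiveGraph C ⥤ GroupoidObj C) (φ : V ⋙ forgetToRG C ≅ 𝟭 _)

noncomputable def sectionComp (G : ReflexiveGraph C) {Z : C} (a b : Z ⟶ G.C1)
    (h : a ≫ G.c = b ≫ G.d) : Z ⟶ G.C1 :=
  (V.obj G).retractComp (φ.inv.app G) (φ.hom.app G) a b h

lemma precomp_sectionComp (G : ReflexiveGraph C) {W Z : C} (w : W ⟶ Z) (a b : Z ⟶ G.C1)
    (h : a ≫ G.c = b ≫ G.d) :
    w ≫ sectionComp V φ G a b h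
      = sectionComp V φ G (w ≫ a) (w ≫ b) (by simp only [Category.assoc, h]) :=
  GroupoidObj.precomp_retractComp _ _ _ w a b h

lemma sectionComp_of_eq_right (G : ReflexiveGraph C) {Z : C} (a b : Z ⟶ G.C1)
    (hb : b = a ≫ G.c ≫ G.e) (h : a ≫ G.c = b ≫ G.d) : sectionComp V φ G a b h = a :=
  GroupoidObj.retractComp_of_eq_right (congrArg RGHom.f1 (φ.inv_hom_id_app G)) a b hb h

lemma sectionComp_of_eq_left (G : ReflexiveGraph C) {Z : C} (a b : Z ⟶ G.C1)
    (ha : a = b ≫ G.d ≫ G.e) (h : a ≫ G.c = b ≫ G.d) : sectionComp V φ G a b h = b :=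
  GroupoidObj.retractComp_of_eq_left (congrArg RGHom.f1 (φ.inv_hom_id_app G)) a b ha h

lemma sectionComp_map {G G' : ReflexiveGraph C} (r : G ⟶ G') {Z : C} (a b : Z ⟶ G.C1)
    (h : a ≫ G.c = b ≫ G.d) :
    sectionComp V φ G a b h ≫ RGHom.f1 r
      = sectionComp V φ G' (a ≫ RGHom.f1 r) (b ≫ RGHom.f1 r)
          (by simp only [Category.assoc, RGHom.hc, RGHom.hd, reassoc_of% h]) :=
  GroupoidObj.retractComp_map (V.map r) r (congrArg RGHom.f1 (φ.inv.naturality r).symm)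
    (congrArg RGHom.f1 (φ.hom.naturality r)) a b h

end SectionComp

noncomputable abbrev loopGraph [HasBinaryProducts C] : C ⥤ ReflexiveGraph C where
  obj A :=
    { C1 := A ⨯ A
      C0 := A
      d := prod.fst
      c := prod.fst
      e := diag A
      ed := prod.lift_fst _ _
      ec := prod.lift_fst _ _ }
  map f := ⟨f, prod.map f f, prod.map_fst _ _, prod.map_fst _ _, by simp⟩
  map_id _ := RGHom.ext rfl prod.map_id_id
  map_comp _ _ := RGHom.ext rfl (prod.map_map _ _ _ _).symm

namespace NaturalMaltsevOp

variable [HasBinaryProducts C] (V : ReflexiveGraph C ⥤ GroupoidObj C)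
  (φ : V ⋙ forgetToRG C ≅ 𝟭 _)

noncomputable def ofIso : NaturalMaltsevOp C where
  p A := sectionComp V φ (loopGraph.obj A)
    (prod.lift (prod.fst ≫ prod.snd) (prod.fst ≫ prod.fst)) (prod.lift (prod.fst ≫ prod.snd) prod.snd) (by simp) ≫ prod.snd
  naturality f := by
    rw [Category.assoc, ← prod.map_snd f f, ← Category.assoc, ← Category.assoc,
      precomp_sectionComp, sectionComp_map V φ (loopGraph.map f)]
    congr 2 <;> ext <;> simp
  self_right A := by
    rw [← Category.assoc, precomp_sectionComp, sectionComp_of_eq_right]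
    · simp
    · ext <;> simp
  self_left A := by
    rw [← Category.assoc, precomp_sectionComp, sectionComp_of_eq_left]
    · simp
    · ext <;> simp

end NaturalMaltsevOp

/-- `C` is naturally Mal'tsev iff the forgetful functor from internal
groupoids to reflexive graphs is an isomorphism of categories; in particular in a
naturally Mal'tsev category every reflexive graph carries a unique internal groupoid
structure. -/
theorem stmt13 (C : Type u) [Category.{v} C] [HasFiniteLimits C] :
    (IsNaturallyMaltsev C ↔
      ∃ V : ReflexiveGraph C ⥤ GroupoidObj C,
        forgetToRG C ⋙ V = 𝟭 (GroupoidObj C) ∧ V ⋙ forgetToRG C = 𝟭 (ReflexiveGraph C)) ∧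
    (IsNaturallyMaltsev C →
      ∀ G : ReflexiveGraph C, ∃! S : CatStruct G, S.HasInverses) := by
  rw [isNaturallyMaltsev_iff_nonempty]
  refine ⟨⟨fun ⟨M⟩ => ?_, fun ⟨V, _, hV⟩ => ⟨.ofIso V (eqToIso hV)⟩⟩,
    fun ⟨M⟩ => M.existsUnique_catStruct⟩
  exact ⟨M.toGroupoid, M.forget_comp_toGroupoid, M.toGroupoid_comp_forget⟩
end

section
/- In an exact naturally Mal'tsev category with coequalizers, for a regular epimorphism q : X → Y and a split monomorphism δ : X → S with retraction f : S → X, the commutative square formed by c : S → C (pushout injection), f : S → X, q : X → Y and the induced retraction f̄ : C → Y is a pullback. -/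
open CategoryTheory CategoryTheory.Limits

universe v u v' u'

variable {C : Type u} [Category.{v} C]

/-!
The kernel pair of `c` is the equivalence relation on `S` generated by `δ q₁ ~ δ q₂`. With the
natural Mal'tsev operation `p` it can be described explicitly: `s ~ s'` iff `q f s = q f s'` and
`s' = p(s, δ f s, δ f s')`. Naturality of `p` gives `p(p(a, x, y), y, z) = p(a, x, z)`, which makes
this relation an equivalence relation; by exactness it is a kernel pair, and since it contains
`(δ q₁, δ q₂)` it contains the kernel pair of `c`. Hence `f` and `c` are jointly monic, and a pair
`(x, t)` with `q x = f̄ t` lifts to `S`: on the pullback of the regular epi `c` along `t`, the local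
lift `p(s, δ f s, δ x)` is compatible with the kernel pair of the cover, so it descends.
-/

structure NaturalMaltsevOperation (C : Type u) [Category.{v} C] [HasBinaryProducts C] where
  p : ∀ A : C, (A ⨯ A) ⨯ A ⟶ A
  naturality : ∀ {A B : C} (f : A ⟶ B), prod.map (prod.map f f) f ≫ p B = p A ≫ f
  p_right : ∀ A : C, prod.lift (prod.lift prod.fst prod.snd) prod.snd ≫ p A
    = (prod.fst : A ⨯ A ⟶ A)
  p_left : ∀ A : C, prod.lift (prod.lift prod.fst prod.fst) prod.snd ≫ p A
    = (prod.snd : A ⨯ A ⟶ A)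

namespace NaturalMaltsevOperation

variable [HasBinaryProducts C] (M : NaturalMaltsevOperation C)

noncomputable def op {Z A : C} (a b c : Z ⟶ A) : Z ⟶ A :=
  prod.lift (prod.lift a b) c ≫ M.p A

theorem comp_op {W Z A : C} (w : W ⟶ Z) (a b c : Z ⟶ A) :
    w ≫ M.op a b c = M.op (w ≫ a) (w ≫ b) (w ≫ c) := by
  simp only [op, ← Category.assoc, prod.comp_lift]

theorem op_comp {Z A B : C} (a b c : Z ⟶ A) (g : A ⟶ B) :
    M.op a b c ≫ g = M.op (a ≫ g) (b ≫ g) (c ≫ g) := by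
  rw [op, op, Category.assoc, ← M.naturality g, prod.lift_map_assoc, prod.lift_map]

@[simp]
theorem op_self_right {Z A : C} (a b : Z ⟶ A) : M.op a b b = a := by
  have h : prod.lift (prod.lift a b) b
      = prod.lift a b ≫ prod.lift (prod.lift prod.fst prod.snd) prod.snd := by
    simp only [prod.comp_lift, prod.lift_fst, prod.lift_snd]
  rw [op, h, Category.assoc, M.p_right, prod.lift_fst]

@[simp]
theorem op_self_left {Z A : C} (a b : Z ⟶ A) : M.op a a b = b := by
  have h : prod.lift (prod.lift a a) b
      = prod.lift a b ≫ prod.lift (prod.lift prod.fst prod.fst) prod.snd := by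
    simp only [prod.comp_lift, prod.lift_fst, prod.lift_snd]
  rw [op, h, Category.assoc, M.p_left, prod.lift_snd]

theorem op_lift {Z A : C} (a₁ a₂ a₃ b₁ b₂ b₃ c₁ c₂ c₃ : Z ⟶ A) :
    M.op (prod.lift (prod.lift a₁ a₂) a₃) (prod.lift (prod.lift b₁ b₂) b₃)
        (prod.lift (prod.lift c₁ c₂) c₃)
      = prod.lift (prod.lift (M.op a₁ b₁ c₁) (M.op a₂ b₂ c₂)) (M.op a₃ b₃ c₃) := by
  ext <;> simp only [op_comp, prod.lift_fst, prod.lift_snd]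

theorem op_interchange {Z A : C} (a₁ a₂ a₃ b₁ b₂ b₃ c₁ c₂ c₃ : Z ⟶ A) :
    M.op (M.op a₁ a₂ a₃) (M.op b₁ b₂ b₃) (M.op c₁ c₂ c₃)
      = M.op (M.op a₁ b₁ c₁) (M.op a₂ b₂ c₂) (M.op a₃ b₃ c₃) := by
  have h := M.op_comp (prod.lift (prod.lift a₁ a₂) a₃) (prod.lift (prod.lift b₁ b₂) b₃)
    (prod.lift (prod.lift c₁ c₂) c₃) (M.p A)
  rw [op_lift] at h
  exact h.symm

theorem op_op_cancel {Z A : C} (a x y z : Z ⟶ A) :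
    M.op (M.op a x y) y z = M.op a x z :=
  calc M.op (M.op a x y) y z
        = M.op (M.op a x y) (M.op x x y) (M.op x x z) := by rw [op_self_left, op_self_left]
    _ = M.op (M.op a x x) (M.op x x x) (M.op y y z) := M.op_interchange ..
    _ = M.op a x z := by simp only [op_self_left, op_self_right]

theorem eq_op_symm {Z A : C} {u v a b : Z ⟶ A} (h : v = M.op u a b) : u = M.op v b a := by
  rw [h, op_op_cancel, op_self_right]

theorem eq_op_trans {Z A : C} {u v w a b c : Z ⟶ A} (h₁ : v = M.op u a b) (h₂ : w = M.op v b c) :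
    w = M.op u a c := by
  rw [h₂, h₁, op_op_cancel]

theorem op_comp_retraction {Z X S : C} {f : S ⟶ X} {δ : X ⟶ S} (hf : δ ≫ f = 𝟙 X)
    (u : Z ⟶ S) (x : Z ⟶ X) : M.op u (u ≫ f ≫ δ) (x ≫ δ) ≫ f = x := by
  simp [op_comp, hf]

end NaturalMaltsevOperation

section PushoutRel

variable [HasBinaryProducts C] [HasPullbacks C] (M : NaturalMaltsevOperation C)
  {X Y S : C} (f : S ⟶ X) (δ : X ⟶ S) (hf : δ ≫ f = 𝟙 X) (q : X ⟶ Y)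

/-- Parametrised by the pairs `(s, x)` with `q (f s) = q x`, relating `s` to `p(s, δ f s, δ x)`. -/
noncomputable def pushoutRel : RelOn S where
  R := pullback (f ≫ q) q
  r1 := pullback.fst _ _
  r2 := M.op (pullback.fst _ _) (pullback.fst _ _ ≫ f ≫ δ) (pullback.snd _ _ ≫ δ)
  jmono a b h₁ h₂ := by
    have hsnd := congrArg (· ≫ f) h₂
    simp only [Category.assoc, M.op_comp_retraction hf] at hsnd
    exact pullback.hom_ext h₁ hsnd

theorem pushoutRel_r2_comp :
    (pushoutRel M f δ hf q).r2 ≫ f = pullback.snd (f ≫ q) q :=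
  M.op_comp_retraction hf _ _

theorem pushoutRel_r1_comp_eq :
    (pushoutRel M f δ hf q).r1 ≫ f ≫ q = (pushoutRel M f δ hf q).r2 ≫ f ≫ q := by
  rw [← Category.assoc (pushoutRel M f δ hf q).r2, pushoutRel_r2_comp]
  exact pullback.condition

theorem pushoutRel_r2_eq : (pushoutRel M f δ hf q).r2
    = M.op (pushoutRel M f δ hf q).r1 ((pushoutRel M f δ hf q).r1 ≫ f ≫ δ)
        ((pushoutRel M f δ hf q).r2 ≫ f ≫ δ) := by
  rw [← Category.assoc (pushoutRel M f δ hf q).r2, pushoutRel_r2_comp]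
  rfl

theorem pushoutRel_relates_iff {Z : C} (u u' : Z ⟶ S) :
    (∃ e : Z ⟶ (pushoutRel M f δ hf q).R,
        e ≫ (pushoutRel M f δ hf q).r1 = u ∧ e ≫ (pushoutRel M f δ hf q).r2 = u') ↔
      u ≫ f ≫ q = u' ≫ f ≫ q ∧ u' = M.op u (u ≫ f ≫ δ) (u' ≫ f ≫ δ) := by
  constructor
  · rintro ⟨e, rfl, rfl⟩
    refine ⟨by simp only [Category.assoc, pushoutRel_r1_comp_eq], ?_⟩
    conv_lhs => rw [pushoutRel_r2_eq]
    simp only [M.comp_op, Category.assoc]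
  · rintro ⟨hq, hu'⟩
    refine ⟨pullback.lift u (u' ≫ f) (by simpa using hq), pullback.lift_fst _ _ _, ?_⟩
    refine Eq.trans ?_ hu'.symm
    simp only [pushoutRel, M.comp_op, pullback.lift_fst_assoc, pullback.lift_fst,
      pullback.lift_snd_assoc, Category.assoc]

theorem pushoutRel_isEquivalence : (pushoutRel M f δ hf q).IsEquivalence := by
  have rel {Z : C} (u u' : Z ⟶ S) := pushoutRel_relates_iff M f δ hf q u u'
  refine ⟨?_, ?_, ?_⟩
  · exact (rel (𝟙 S) (𝟙 S)).2 ⟨rfl, (M.op_self_right _ _).symm⟩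
  · obtain ⟨hq, hr2⟩ := (rel _ _).1 ⟨𝟙 _, Category.id_comp _, Category.id_comp _⟩
    exact (rel _ _).2 ⟨hq.symm, M.eq_op_symm hr2⟩
  · intro Z a b hab
    obtain ⟨hq₁, h₁⟩ := (rel _ _).1 ⟨a, rfl, rfl⟩
    obtain ⟨hq₂, h₂⟩ := (rel _ _).1 ⟨b, rfl, rfl⟩
    rw [← hab] at hq₂ h₂
    exact (rel _ _).2 ⟨hq₁.trans hq₂, M.eq_op_trans h₁ h₂⟩

end PushoutRel

theorem eq_op_of_comp_eq [HasBinaryProducts C] [HasPullbacks C] [ExactCat C]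
    (M : NaturalMaltsevOperation C) {X Y S K Cc : C} {f : S ⟶ X} {δ : X ⟶ S}
    (hf : δ ≫ f = 𝟙 X) {q : X ⟶ Y} {q₁ q₂ : K ⟶ X} (hk : q₁ ≫ q = q₂ ≫ q) {c : S ⟶ Cc}
    {hcw : (q₁ ≫ δ) ≫ c = (q₂ ≫ δ) ≫ c} (hc : IsColimit (Cofork.ofπ c hcw))
    {Z : C} {u u' : Z ⟶ S} (h : u ≫ c = u' ≫ c) :
    u' = M.op u (u ≫ f ≫ δ) (u' ≫ f ≫ δ) := by
  have rel {Z : C} (u u' : Z ⟶ S) := pushoutRel_relates_iff M f δ hf q u u'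
  obtain ⟨W, g, hg, ⟨hker⟩⟩ := ExactCat.effective _ (pushoutRel_isEquivalence M f δ hf q)
  have hgen : (q₁ ≫ δ) ≫ g = (q₂ ≫ δ) ≫ g := by
    obtain ⟨e, he₁, he₂⟩ := (rel (q₁ ≫ δ) (q₂ ≫ δ)).2
      ⟨by simpa [reassoc_of% hf] using hk, by simp [reassoc_of% hf]⟩
    rw [← he₁, ← he₂, Category.assoc, Category.assoc, hg]
  obtain ⟨m, hm⟩ := Cofork.IsColimit.desc' hc g hgen
  have hug : u ≫ g = u' ≫ g := by
    simp only [← hm, Cofork.π_ofπ, reassoc_of% h]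
  obtain ⟨e, he₁, he₂⟩ := PullbackCone.IsLimit.lift' hker u u' hug
  exact ((rel u u').1 ⟨e, he₁, he₂⟩).2

section Lift

variable [HasBinaryProducts C] [HasPullbacks C] [RegularCat C] (M : NaturalMaltsevOperation C)
  {X Y S Cc : C} {f : S ⟶ X} {δ : X ⟶ S} {q : X ⟶ Y} {c : S ⟶ Cc}

theorem exists_lift_of_eq_op (hf : δ ≫ f = 𝟙 X) (hc : RegularEpi c)
    (hker : ∀ {Z : C} (u u' : Z ⟶ S), u ≫ c = u' ≫ c → u' = M.op u (u ≫ f ≫ δ) (u' ≫ f ≫ δ))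
    {δbar : Y ⟶ Cc} (hδbar : q ≫ δbar = δ ≫ c) {fbar : Cc ⟶ Y} (hfbar : c ≫ fbar = f ≫ q)
    {T : C} (x : T ⟶ X) (t : T ⟶ Cc) (hxt : x ≫ q = t ≫ fbar) :
    ∃ l : T ⟶ S, l ≫ f = x ∧ l ≫ c = t := by
  set s := pullback.fst c t
  set π := pullback.snd c t
  have hsπ : s ≫ c = π ≫ t := pullback.condition
  obtain ⟨hπ⟩ := RegularCat.regEpiStable c t s π hsπ ⟨pullbackIsPullback c t⟩ ⟨hc⟩
  have : Epi π := RegularEpi.epi π hπ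
  set l' := M.op s (s ≫ f ≫ δ) (π ≫ x ≫ δ)
  have hl'f : l' ≫ f = π ≫ x := by
    simpa only [Category.assoc] using M.op_comp_retraction hf s (π ≫ x)
  have hl'c : l' ≫ c = π ≫ t := by
    have hfq : s ≫ f ≫ q = π ≫ x ≫ q := by
      rw [← hfbar, reassoc_of% hsπ, hxt]
    rw [M.op_comp]
    simp only [Category.assoc, ← hδbar]
    rw [reassoc_of% hfq, M.op_self_right, hsπ]
  have hl' : hπ.left ≫ l' = hπ.right ≫ l' := by
    have hs := hker (hπ.left ≫ s) (hπ.right ≫ s) (by simp only [Category.assoc, hsπ, hπ.w_assoc])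
    calc hπ.left ≫ l'
        = M.op (hπ.left ≫ s) ((hπ.left ≫ s) ≫ f ≫ δ) ((hπ.right ≫ π) ≫ x ≫ δ) := by
          simp only [l', M.comp_op, Category.assoc, hπ.w_assoc]
      _ = M.op (M.op (hπ.left ≫ s) ((hπ.left ≫ s) ≫ f ≫ δ) ((hπ.right ≫ s) ≫ f ≫ δ))
            ((hπ.right ≫ s) ≫ f ≫ δ) ((hπ.right ≫ π) ≫ x ≫ δ) := by
          rw [M.op_op_cancel]
      _ = M.op (hπ.right ≫ s) ((hπ.right ≫ s) ≫ f ≫ δ) ((hπ.right ≫ π) ≫ x ≫ δ) := by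
          rw [← hs]
      _ = hπ.right ≫ l' := by simp only [l', M.comp_op, Category.assoc]
  obtain ⟨l, hl⟩ := Cofork.IsColimit.desc' hπ.isColimit l' hl'
  replace hl : π ≫ l = l' := hl
  exact ⟨l, (cancel_epi π).1 (by rw [← Category.assoc, hl, hl'f]),
    (cancel_epi π).1 (by rw [← Category.assoc, hl, hl'c])⟩

theorem isPullback_of_eq_op (hf : δ ≫ f = 𝟙 X) (hc : RegularEpi c)
    (hker : ∀ {Z : C} (u u' : Z ⟶ S), u ≫ c = u' ≫ c → u' = M.op u (u ≫ f ≫ δ) (u' ≫ f ≫ δ))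
    {δbar : Y ⟶ Cc} (hδbar : q ≫ δbar = δ ≫ c) {fbar : Cc ⟶ Y} (hfbar : c ≫ fbar = f ≫ q) :
    IsPullback f c q fbar := by
  refine IsPullback.mk' hfbar.symm (fun T u u' huf huc => ?_)
    (fun _ => exists_lift_of_eq_op M hf hc hker hδbar hfbar)
  rw [hker u u' huc, ← Category.assoc u' f δ, ← huf, Category.assoc, M.op_self_right]

end Lift

theorem stmt14_general {C : Type u} [Category.{v} C] [HasFiniteLimits C]
    [ExactCat C] (hNM : IsNaturallyMaltsev C)
    {X Y S : C} (q : X ⟶ Y)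
    (δ : X ⟶ S) (f : S ⟶ X) (hf : δ ≫ f = 𝟙 X)
    {K : C} (q1 q2 : K ⟶ X) (hk : q1 ≫ q = q2 ≫ q)
    {Cc : C} (c : S ⟶ Cc) (hcw : (q1 ≫ δ) ≫ c = (q2 ≫ δ) ≫ c)
    (hcoeq : Nonempty (IsColimit (Cofork.ofπ c hcw)))
    (δbar : Y ⟶ Cc) (hδbar : q ≫ δbar = δ ≫ c)
    (fbar : Cc ⟶ Y) (h2 : c ≫ fbar = f ≫ q) :
    IsPullback f c q fbar := by
  obtain ⟨p, hnat, hp₁, hp₂⟩ := hNM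
  let M : NaturalMaltsevOperation C := ⟨p, hnat, hp₁, hp₂⟩
  obtain ⟨hc⟩ := hcoeq
  exact isPullback_of_eq_op M hf ⟨K, q1 ≫ δ, q2 ≫ δ, hcw, hc⟩
    (fun u u' h => eq_op_of_comp_eq M hf hk hc h) hδbar h2

/-- In an exact naturally Mal'tsev category with coequalizers, the square
formed by the pushout injection `c`, the retraction `f`, the regular epi `q` and the
induced retraction `fbar` is a pullback (Bourn's characterization). -/
theorem stmt14 {C : Type u} [Category.{v} C] [HasFiniteLimits C] [HasCoequalizers C]
    [ExactCat C] (hNM : IsNaturallyMaltsev C)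
    {X Y S : C} (q : X ⟶ Y) (hq : Nonempty (RegularEpi q))
    (δ : X ⟶ S) (f : S ⟶ X) (hf : δ ≫ f = 𝟙 X)
    {K : C} (q1 q2 : K ⟶ X) (hk : q1 ≫ q = q2 ≫ q)
    (hkp : Nonempty (IsLimit (PullbackCone.mk q1 q2 hk)))
    {Cc : C} (c : S ⟶ Cc) (hcw : (q1 ≫ δ) ≫ c = (q2 ≫ δ) ≫ c)
    (hcoeq : Nonempty (IsColimit (Cofork.ofπ c hcw)))
    (δbar : Y ⟶ Cc) (hδbar : q ≫ δbar = δ ≫ c)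
    (fbar : Cc ⟶ Y) (h1 : δbar ≫ fbar = 𝟙 Y) (h2 : c ≫ fbar = f ≫ q) :
    IsPullback f c q fbar :=
  stmt14_general hNM q δ f hf q1 q2 hk c hcw hcoeq δbar hδbar fbar h2
end

section
/- In an exact naturally Mal'tsev category with coequalizers, the categorical commutator of any two equivalence relations R and S on the same object X is trivial: there exists a double centralizing relation on R and S. -/
open CategoryTheory CategoryTheory.Limits

universe v u v' u'

variable {C : Type u} [Category.{v} C]

/-!
Let `m` be the natural Mal'tsev operation. For `s = (x, y) ∈ S` and `r = (x, z) ∈ R`, the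
translate `m((z,z), (x,x), (x,y)) = (z, m(z,x,y))` again lies in `S`, and the pairs
`(s, translate s r)` form a reflexive relation on `S`, indexed by the pullback of `S.r1` and
`R.r1`. In a Mal'tsev category it is an equivalence relation, hence effective by exactness.
It contains the pairs `(δS x, δS z)` for `(x, z) ∈ R`, which `c` coequalizes, and `c` collapses
it, so it is the kernel pair `Δ` of `c`. This identifies `Δ` with that pullback; the other
three squares follow by applying this to the opposite relations.
-/

structure NaturalMaltsevOp_s15 (C : Type u) [Category.{v} C] [HasBinaryProducts C] where
  p : ∀ A : C, (A ⨯ A) ⨯ A ⟶ A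
  naturality : ∀ {A B : C} (f : A ⟶ B), prod.map (prod.map f f) f ≫ p B = p A ≫ f
  lift_fst_snd_snd : ∀ A : C, prod.lift (prod.lift prod.fst prod.snd) prod.snd ≫ p A
      = (prod.fst : A ⨯ A ⟶ A)
  lift_fst_fst_snd : ∀ A : C, prod.lift (prod.lift prod.fst prod.fst) prod.snd ≫ p A
      = (prod.snd : A ⨯ A ⟶ A)

lemma IsNaturallyMaltsev.nonempty_naturalMaltsevOp {C : Type u} [Category.{v} C]
    [HasBinaryProducts C] (h : IsNaturallyMaltsev C) : Nonempty (NaturalMaltsevOp_s15 C) :=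
  let ⟨p, hnat, hl, hr⟩ := h
  ⟨⟨p, hnat, hl, hr⟩⟩

namespace NaturalMaltsevOp_s15

variable {C : Type u} [Category.{v} C] [HasBinaryProducts C] (m : NaturalMaltsevOp_s15 C)

noncomputable def eval {Z A : C} (a b c : Z ⟶ A) : Z ⟶ A := prod.lift (prod.lift a b) c ≫ m.p A

@[simp]
lemma comp_eval {W Z A : C} (w : W ⟶ Z) (a b c : Z ⟶ A) :
    w ≫ m.eval a b c = m.eval (w ≫ a) (w ≫ b) (w ≫ c) := by
  rw [eval, eval, ← Category.assoc, prod.comp_lift, prod.comp_lift]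

@[simp]
lemma eval_comp {Z A B : C} (a b c : Z ⟶ A) (f : A ⟶ B) :
    m.eval a b c ≫ f = m.eval (a ≫ f) (b ≫ f) (c ≫ f) := by
  rw [eval, eval, Category.assoc, ← m.naturality f, ← Category.assoc]
  congr 1
  ext <;> simp

@[simp]
lemma eval_self_right {Z A : C} (a b : Z ⟶ A) : m.eval a b b = a := by
  have h : prod.lift (prod.lift a b) b
      = prod.lift a b ≫ prod.lift (prod.lift prod.fst prod.snd) prod.snd := by
    simp only [prod.comp_lift, prod.lift_fst, prod.lift_snd]
  rw [eval, h, Category.assoc, m.lift_fst_snd_snd, prod.lift_fst]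

@[simp]
lemma eval_self_left {Z A : C} (a b : Z ⟶ A) : m.eval a a b = b := by
  have h : prod.lift (prod.lift a a) b
      = prod.lift a b ≫ prod.lift (prod.lift prod.fst prod.fst) prod.snd := by
    simp only [prod.comp_lift, prod.lift_fst, prod.lift_snd]
  rw [eval, h, Category.assoc, m.lift_fst_fst_snd, prod.lift_snd]

theorem maltsevCat (m : NaturalMaltsevOp_s15 C) : MaltsevCat C where
  refl_is_equiv ρ := by
    rintro ⟨δ, hδ1, hδ2⟩
    -- `(x, y) ↦ m((y, y), (x, y), (x, x)) = (y, x)` and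
    -- `(x, y), (y, z) ↦ m((x, y), (y, y), (y, z)) = (x, z)`
    refine ⟨⟨m.eval (ρ.r2 ≫ δ) (𝟙 _) (ρ.r1 ≫ δ), ?_, ?_⟩, fun a b hab => ?_⟩
    · simp [hδ1]
    · simp [hδ2]
    · refine ⟨m.eval a (a ≫ ρ.r2 ≫ δ) b, ?_, ?_⟩
      · simp [hδ1, hab]
      · simp [hδ2]

end NaturalMaltsevOp_s15

def RelOn.opp {C : Type u} [Category.{v} C] {X : C} (ρ : RelOn X) : RelOn X where
  R := ρ.R
  r1 := ρ.r2
  r2 := ρ.r1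
  jmono f g h1 h2 := ρ.jmono f g h2 h1

lemma RelOn.Reflexive.opp {C : Type u} [Category.{v} C] {X : C} {ρ : RelOn X}
    (h : ρ.Reflexive) : ρ.opp.Reflexive :=
  let ⟨δ, h1, h2⟩ := h
  ⟨δ, h2, h1⟩

noncomputable def Cofork.isColimitOfπSymm {C : Type u} [Category.{v} C] {A B Q : C}
    {f g : A ⟶ B} {c : B ⟶ Q} (w : f ≫ c = g ≫ c) (h : IsColimit (Cofork.ofπ c w)) :
    IsColimit (Cofork.ofπ c w.symm) :=
  Cofork.IsColimit.mk _
    (fun s => Cofork.IsColimit.desc h s.π s.condition.symm)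
    (fun s => Cofork.IsColimit.π_desc' h s.π s.condition.symm)
    (fun s _ hm => Cofork.IsColimit.hom_ext h
      (hm.trans (Cofork.IsColimit.π_desc' h s.π s.condition.symm).symm))

lemma RelOn.Effective.isKernelPair_of_isColimit {C : Type u} [Category.{v} C] {A B Q : C}
    {ρ : RelOn A} (hρ : ρ.Effective) {f g : B ⟶ A} {c : A ⟶ Q} {hc : f ≫ c = g ≫ c}
    (hcoeq : IsColimit (Cofork.ofπ c hc)) (j : B ⟶ ρ.R) (hj1 : j ≫ ρ.r1 = f)
    (hj2 : j ≫ ρ.r2 = g) (hρc : ρ.r1 ≫ c = ρ.r2 ≫ c) :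
    IsKernelPair c ρ.r1 ρ.r2 := by
  obtain ⟨Y, q, hq, ⟨hlim⟩⟩ := hρ
  have hfg : f ≫ q = g ≫ q := by rw [← hj1, ← hj2, Category.assoc, hq, Category.assoc]
  have hqc : q = c ≫ Cofork.IsColimit.desc hcoeq q hfg :=
    (Cofork.IsColimit.π_desc' hcoeq q hfg).symm
  have hker : IsKernelPair q ρ.r1 ρ.r2 := IsPullback.of_isLimit hlim
  rw [hqc] at hker
  exact hker.cancel_right hρc

namespace NaturalMaltsevOp_s15

variable {C : Type u} [Category.{v} C] [HasFiniteLimits C] (m : NaturalMaltsevOp_s15 C)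
  {X : C} (R S : RelOn X) (δS : X ⟶ S.R)

noncomputable def translate : pullback S.r1 R.r1 ⟶ S.R :=
  m.eval (pullback.snd _ _ ≫ R.r2 ≫ δS) (pullback.snd _ _ ≫ R.r1 ≫ δS) (pullback.fst _ _)

variable {R S δS}

lemma translate_r1 (hδ : δS ≫ S.r1 = 𝟙 X) :
    m.translate R S δS ≫ S.r1 = pullback.snd _ _ ≫ R.r2 := by
  simp [translate, hδ, pullback.condition]

lemma fst_comp_eq_translate_comp {Q : C} (c : S.R ⟶ Q) (hc : (R.r1 ≫ δS) ≫ c = (R.r2 ≫ δS) ≫ c) :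
    pullback.fst _ _ ≫ c = m.translate R S δS ≫ c := by
  simp only [Category.assoc] at hc
  simp [translate, hc]

variable (R) in
noncomputable def translateRel (hδ : δS ≫ S.r1 = 𝟙 X) : RelOn S.R where
  R := pullback S.r1 R.r1
  r1 := pullback.fst _ _
  r2 := m.translate R S δS
  jmono f g h1 h2 := by
    apply pullback.hom_ext h1
    apply R.jmono
    · simpa [← pullback.condition] using h1 =≫ S.r1
    · simpa [translate_r1 m hδ] using h2 =≫ S.r1

lemma translateRel_reflexive (hR : R.Reflexive) (hδ : δS ≫ S.r1 = 𝟙 X) :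
    (m.translateRel R hδ).Reflexive := by
  obtain ⟨δR, hδR1, hδR2⟩ := hR
  refine ⟨pullback.lift (𝟙 S.R) (S.r1 ≫ δR) (by simp [hδR1]), pullback.lift_fst _ _ _, ?_⟩
  simp only [translateRel, translate, comp_eval, pullback.lift_fst, pullback.lift_snd_assoc,
    Category.assoc, reassoc_of% hδR1, reassoc_of% hδR2, eval_self_left]

lemma lift_translate (hδ : δS ≫ S.r1 = 𝟙 X) :
    pullback.lift (R.r1 ≫ δS) (𝟙 R.R) (by simp [hδ]) ≫ m.translate R S δS = R.r2 ≫ δS := by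
  simp only [translate, comp_eval, pullback.lift_fst, pullback.lift_snd_assoc, Category.id_comp,
    eval_self_right]

end NaturalMaltsevOp_s15

lemma NaturalMaltsevOp_s15.isPullback_of_isKernelPair {C : Type u} [Category.{v} C]
    [HasFiniteLimits C] [ExactCat C] (m : NaturalMaltsevOp_s15 C) {X : C} {R S : RelOn X}
    (hR : R.Reflexive) {δS : X ⟶ S.R} (hδ : δS ≫ S.r1 = 𝟙 X)
    {Q : C} {c : S.R ⟶ Q} {hc : (R.r1 ≫ δS) ≫ c = (R.r2 ≫ δS) ≫ c}
    (hcoeq : IsColimit (Cofork.ofπ c hc)) {Δ : C} {π1 π2 : Δ ⟶ S.R} (hkp : IsKernelPair c π1 π2)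
    {p1 : Δ ⟶ R.R} (hp1 : p1 ≫ R.r1 = π1 ≫ S.r1) (hp2 : p1 ≫ R.r2 = π2 ≫ S.r1) :
    IsPullback π1 p1 S.r1 R.r1 := by
  have := m.maltsevCat
  have hrefl := m.translateRel_reflexive hR hδ
  have hequiv : (m.translateRel R hδ).IsEquivalence :=
    ⟨hrefl, MaltsevCat.refl_is_equiv _ hrefl⟩
  have hker : IsKernelPair c (pullback.fst S.r1 R.r1) (m.translate R S δS) :=
    (ExactCat.effective _ hequiv).isKernelPair_of_isColimit hcoeq _ (pullback.lift_fst _ _ _)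
      (m.lift_translate hδ) (m.fst_comp_eq_translate_comp c hc)
  have hfst := hkp.isoIsPullback_hom_fst _ _ hker
  have htranslate := hkp.isoIsPullback_hom_snd _ _ hker
  refine IsPullback.of_iso_pullback ⟨hp1.symm⟩ (hkp.isoIsPullback _ _ hker) hfst ?_
  apply R.jmono
  · rw [Category.assoc, ← pullback.condition, reassoc_of% hfst, hp1]
  · rw [Category.assoc, ← m.translate_r1 hδ, reassoc_of% htranslate, hp2]

theorem stmt15_general {C : Type u} [Category.{v} C] [HasFiniteLimits C]
    [ExactCat C] (hNM : IsNaturallyMaltsev C)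
    {X : C} (R S : RelOn X) (hR : R.IsEquivalence)
    (δS : X ⟶ S.R) (hδ1 : δS ≫ S.r1 = 𝟙 X) (hδ2 : δS ≫ S.r2 = 𝟙 X)
    {Q : C} (c : S.R ⟶ Q) (hc : (R.r1 ≫ δS) ≫ c = (R.r2 ≫ δS) ≫ c)
    (hcoeq : Nonempty (IsColimit (Cofork.ofπ c hc)))
    {Δ : C} (π1 π2 : Δ ⟶ S.R) (hπ : π1 ≫ c = π2 ≫ c)
    (hkp : Nonempty (IsLimit (PullbackCone.mk π1 π2 hπ)))
    (p1 p2 : Δ ⟶ R.R)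
    (hp11 : p1 ≫ R.r1 = π1 ≫ S.r1) (hp12 : p1 ≫ R.r2 = π2 ≫ S.r1)
    (hp21 : p2 ≫ R.r1 = π1 ≫ S.r2) (hp22 : p2 ≫ R.r2 = π2 ≫ S.r2) :
    IsPullback π1 p1 S.r1 R.r1 ∧ IsPullback π2 p1 S.r1 R.r2 ∧
    IsPullback π1 p2 S.r2 R.r1 ∧ IsPullback π2 p2 S.r2 R.r2 := by
  obtain ⟨m⟩ := hNM.nonempty_naturalMaltsevOp
  obtain ⟨hcoeq⟩ := hcoeq
  have hcoeq' := Cofork.isColimitOfπSymm hc hcoeq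
  have hker : IsKernelPair c π1 π2 := IsPullback.of_isLimit hkp.some
  exact ⟨m.isPullback_of_isKernelPair (R := R) (S := S) hR.1 hδ1 hcoeq hker hp11 hp12,
    m.isPullback_of_isKernelPair (R := R.opp) (S := S) hR.1.opp hδ1 hcoeq' hker.flip hp12 hp11,
    m.isPullback_of_isKernelPair (R := R) (S := S.opp) hR.1 hδ2 hcoeq hker hp21 hp22,
    m.isPullback_of_isKernelPair (R := R.opp) (S := S.opp) hR.1.opp hδ2 hcoeq' hker.flip hp22 hp21⟩

/-- In an exact naturally Mal'tsev category with coequalizers, the double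
equivalence relation induced on two equivalence relations `R`, `S` on `X` (the kernel
pair of the coequalizer `c : S → S/R` of `δ_S ∘ r₁`, `δ_S ∘ r₂`) is a double
centralizing relation: all four projection squares are pullbacks, so `[R,S]` is
trivial. -/
theorem stmt15 {C : Type u} [Category.{v} C] [HasFiniteLimits C] [HasCoequalizers C]
    [ExactCat C] (hNM : IsNaturallyMaltsev C)
    {X : C} (R S : RelOn X) (hR : R.IsEquivalence) (hS : S.IsEquivalence)
    (δS : X ⟶ S.R) (hδ1 : δS ≫ S.r1 = 𝟙 X) (hδ2 : δS ≫ S.r2 = 𝟙 X)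
    {Q : C} (c : S.R ⟶ Q) (hc : (R.r1 ≫ δS) ≫ c = (R.r2 ≫ δS) ≫ c)
    (hcoeq : Nonempty (IsColimit (Cofork.ofπ c hc)))
    {Δ : C} (π1 π2 : Δ ⟶ S.R) (hπ : π1 ≫ c = π2 ≫ c)
    (hkp : Nonempty (IsLimit (PullbackCone.mk π1 π2 hπ)))
    (p1 p2 : Δ ⟶ R.R)
    (hp11 : p1 ≫ R.r1 = π1 ≫ S.r1) (hp12 : p1 ≫ R.r2 = π2 ≫ S.r1)
    (hp21 : p2 ≫ R.r1 = π1 ≫ S.r2) (hp22 : p2 ≫ R.r2 = π2 ≫ S.r2) :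
    IsPullback π1 p1 S.r1 R.r1 ∧ IsPullback π2 p1 S.r1 R.r2 ∧
    IsPullback π1 p2 S.r2 R.r1 ∧ IsPullback π2 p2 S.r2 R.r2 :=
  stmt15_general hNM R S hR δS hδ1 hδ2 c hc hcoeq π1 π2 hπ hkp p1 p2 hp11 hp12 hp21 hp22
end

section
/- Let C be a semi-abelian action representable category, X a semi-abelian category, and H : X → C a fully faithful left adjoint functor that preserves kernels of split epimorphisms (protoadditive). Then X is action representable. -/
open CategoryTheory CategoryTheory.Limits

universe v u v' u'

variable {C : Type u} [Category.{v} C]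

section Stmt16Aux

variable {X' : Type u'} {C' : Type u} [Category.{v'} X'] [Category.{v} C']

/-- A left adjoint into a pointed category sends zero objects to zero objects. -/
lemma stmt16_leftAdj_isZero {F : X' ⥤ C'} {G : C' ⥤ X'} (adj : F ⊣ G)
    [HasZeroObject C'] {Z : X'} (hZ : IsZero Z) : IsZero (F.obj Z) := by
  obtain ⟨O, hO⟩ := HasZeroObject.zero (C := C')
  have hinit : IsInitial (F.obj Z) :=
    IsInitial.ofUniqueHom (fun Y => (adj.homEquiv Z Y).symm (hZ.to_ (G.obj Y)))
      (fun Y m => by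
        have h := hZ.eq_of_src ((adj.homEquiv Z Y) m) (hZ.to_ (G.obj Y))
        calc m = (adj.homEquiv Z Y).symm ((adj.homEquiv Z Y) m) :=
              (Equiv.symm_apply_apply _ _).symm
          _ = (adj.homEquiv Z Y).symm (hZ.to_ (G.obj Y)) := by rw [h])
  exact hO.of_iso (hinit.uniqueUpToIso hO.isInitial)

/-- A right adjoint into a pointed category sends zero objects to zero objects. -/
lemma stmt16_rightAdj_isZero {F : X' ⥤ C'} {G : C' ⥤ X'} (adj : F ⊣ G)
    [HasZeroObject X'] {Z : C'} (hZ : IsZero Z) : IsZero (G.obj Z) := by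
  obtain ⟨O, hO⟩ := HasZeroObject.zero (C := X')
  have hterm : IsTerminal (G.obj Z) :=
    IsTerminal.ofUniqueHom (fun Y => (adj.homEquiv Y Z) (hZ.from_ (F.obj Y)))
      (fun Y m => by
        have h := hZ.eq_of_tgt ((adj.homEquiv Y Z).symm m) (hZ.from_ (F.obj Y))
        calc m = (adj.homEquiv Y Z) ((adj.homEquiv Y Z).symm m) :=
              (Equiv.apply_symm_apply _ _).symm
          _ = (adj.homEquiv Y Z) (hZ.from_ (F.obj Y)) := by rw [h])
  exact hO.of_iso (hterm.uniqueUpToIso hO.isTerminal)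

end Stmt16Aux

/-- If `C` is semi-abelian action representable, `X` semi-abelian, and
`H : X ⥤ C` a fully faithful protoadditive functor which is a left adjoint, then `X`
is action representable. -/
theorem stmt16 {X : Type u'} {C : Type u} [Category.{v'} X] [Category.{v} C]
    [SemiAbelian C] (hC : ActionRepresentable C) [SemiAbelian X]
    (H : X ⥤ C) [H.Full] [H.Faithful] [H.IsLeftAdjoint] (hp : Protoadditive H) :
    ActionRepresentable X := by
  obtain ⟨R, ⟨adj⟩⟩ := ‹H.IsLeftAdjoint›.exists_rightAdjoint
  haveI : HasZeroObject X := SemiAbelian.hasZeroObject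
  haveI : HasZeroObject C := SemiAbelian.hasZeroObject
  intro X₀
  obtain ⟨E, hE⟩ := hC (H.obj X₀)
  -- the kernel of `R.map E.α` is `X₀` (via the transposed kernel map)
  have hker : IsKernelOf ((adj.homEquiv X₀ E.A) E.κ) (R.map E.α) := by
    constructor
    · obtain ⟨Z₀, hZ₀, g0, h0, hfac⟩ := E.ker.1
      refine ⟨R.obj Z₀, stmt16_rightAdj_isZero adj hZ₀,
        (adj.homEquiv X₀ Z₀) g0, R.map h0, ?_⟩
      rw [← adj.homEquiv_naturality_right, hfac, adj.homEquiv_naturality_right]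
    · intro Z g hg
      obtain ⟨W, hW, a, b, hab⟩ := hg
      have hzc : IsZeroMor ((adj.homEquiv Z E.A).symm g ≫ E.α) := by
        refine ⟨H.obj W, stmt16_leftAdj_isZero adj hW, H.map a,
          (adj.homEquiv W E.B).symm b, ?_⟩
        rw [← adj.homEquiv_naturality_left_symm, ← hab,
          adj.homEquiv_naturality_right_symm]
      obtain ⟨l, hl, hluniq⟩ := E.ker.2 ((adj.homEquiv Z E.A).symm g) hzc
      refine ⟨H.preimage l, ?_, ?_⟩
      · show H.preimage l ≫ (adj.homEquiv X₀ E.A) E.κ = g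
        have h1 : H.preimage l ≫ (adj.homEquiv X₀ E.A) E.κ
            = (adj.homEquiv Z E.A) (H.map (H.preimage l) ≫ E.κ) :=
          (adj.homEquiv_naturality_left _ _).symm
        rw [h1, H.map_preimage, hl, Equiv.apply_symm_apply]
      · intro m hm
        apply H.map_injective
        rw [H.map_preimage]
        apply hluniq
        show H.map m ≫ E.κ = (adj.homEquiv Z E.A).symm g
        rw [← hm, adj.homEquiv_naturality_left_symm, Equiv.symm_apply_apply]
  refine ⟨{ A := R.obj E.A, B := R.obj E.B, κ := (adj.homEquiv X₀ E.A) E.κ,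
            α := R.map E.α, β := R.map E.β,
            split := by rw [← R.map_comp, E.split, R.map_id],
            ker := hker }, ?_⟩
  intro E'
  -- apply `H` to `E'` to get a split extension with kernel `H.obj X₀` in `C`
  have hHker : IsKernelOf (H.map E'.κ) (H.map E'.α) := hp E'.α E'.β E'.split E'.κ E'.ker
  obtain ⟨⟨v, w⟩, ⟨hv1, hv2, hv3⟩, huniq⟩ :=
    hE { A := H.obj E'.A, B := H.obj E'.B, κ := H.map E'.κ, α := H.map E'.α,
         β := H.map E'.β,
         split := by rw [← H.map_comp, E'.split, H.map_id],
         ker := hHker }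
  have hv1' : H.map E'.κ ≫ v = E.κ := hv1
  have hv2' : v ≫ E.α = H.map E'.α ≫ w := hv2
  have hv3' : H.map E'.β ≫ v = w ≫ E.β := hv3
  refine ⟨⟨(adj.homEquiv E'.A E.A) v, (adj.homEquiv E'.B E.B) w⟩, ⟨?_, ?_, ?_⟩, ?_⟩
  · show E'.κ ≫ (adj.homEquiv E'.A E.A) v = (adj.homEquiv X₀ E.A) E.κ
    rw [← adj.homEquiv_naturality_left, hv1']
  · show (adj.homEquiv E'.A E.A) v ≫ R.map E.α = E'.α ≫ (adj.homEquiv E'.B E.B) w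
    rw [← adj.homEquiv_naturality_right, hv2', adj.homEquiv_naturality_left]
  · show E'.β ≫ (adj.homEquiv E'.A E.A) v = (adj.homEquiv E'.B E.B) w ≫ R.map E.β
    rw [← adj.homEquiv_naturality_left, hv3', adj.homEquiv_naturality_right]
  · rintro ⟨v₁, w₁⟩ ⟨h1, h2, h3⟩
    have h1' : E'.κ ≫ v₁ = (adj.homEquiv X₀ E.A) E.κ := h1
    have h2' : v₁ ≫ R.map E.α = E'.α ≫ w₁ := h2
    have h3' : E'.β ≫ v₁ = w₁ ≫ R.map E.β := h3
    have key : ((adj.homEquiv E'.A E.A).symm v₁, (adj.homEquiv E'.B E.B).symm w₁)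
        = (v, w) := by
      apply huniq
      refine ⟨?_, ?_, ?_⟩
      · show H.map E'.κ ≫ (adj.homEquiv E'.A E.A).symm v₁ = E.κ
        rw [← adj.homEquiv_naturality_left_symm, h1', Equiv.symm_apply_apply]
      · show (adj.homEquiv E'.A E.A).symm v₁ ≫ E.α
            = H.map E'.α ≫ (adj.homEquiv E'.B E.B).symm w₁
        rw [← adj.homEquiv_naturality_right_symm, h2',
          adj.homEquiv_naturality_left_symm]
      · show H.map E'.β ≫ (adj.homEquiv E'.A E.A).symm v₁
            = (adj.homEquiv E'.B E.B).symm w₁ ≫ E.β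
        rw [← adj.homEquiv_naturality_left_symm, h3',
          adj.homEquiv_naturality_right_symm]
    injection key with kv kw
    refine Prod.ext ?_ ?_
    · show v₁ = (adj.homEquiv E'.A E.A) v
      rw [← kv, Equiv.apply_symm_apply]
    · show w₁ = (adj.homEquiv E'.B E.B) w
      rw [← kw, Equiv.apply_symm_apply]
end

section
/- If X is a Birkhoff subcategory of a semi-abelian category C, then X is semi-abelian. -/
open CategoryTheory CategoryTheory.Limits

universe v u v' u'

variable {C : Type u} [Category.{v} C]

/-! The inclusion `ι` of the Birkhoff subcategory `X` into `C` is fully faithful and a right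
adjoint, so it preserves and reflects limits, and transposing along the reflection lets every
condition stated with generalized elements of `C` (joint monicity, transitivity, kernels) be
checked in `X`. Finite limits and binary coproducts of `X` exist because `X` is reflective, and
a zero object of `C` lies in `X` as a subobject of its reflection. Coequalizers of kernel pairs
are computed in `C`: by closure under regular quotients they land in `X`, where they remain
coequalizers. Hence `ι` preserves and reflects regular epimorphisms, and regularity, exactness
and the split short five lemma pass from `C` to `X`. -/

namespace RelOn

variable {D : Type u'} [Category.{v'} D] {F : C ⥤ D} {G : D ⥤ C} (adj : F ⊣ G) {Y : D}

def map (ρ : RelOn Y) : RelOn (G.obj Y) where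
  R := G.obj ρ.R
  r1 := G.map ρ.r1
  r2 := G.map ρ.r2
  jmono f g h1 h2 := (adj.homEquiv _ _).symm.injective <|
    ρ.jmono _ _
      (by rw [← adj.homEquiv_naturality_right_symm, h1, adj.homEquiv_naturality_right_symm])
      (by rw [← adj.homEquiv_naturality_right_symm, h2, adj.homEquiv_naturality_right_symm])

variable {ρ : RelOn Y}

lemma Reflexive.map (h : ρ.Reflexive) : (ρ.map adj).Reflexive := by
  obtain ⟨δ, h1, h2⟩ := h
  exact ⟨G.map δ, by simp [RelOn.map, ← G.map_comp, h1], by simp [RelOn.map, ← G.map_comp, h2]⟩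

lemma Symmetric.map (h : ρ.Symmetric) : (ρ.map adj).Symmetric := by
  obtain ⟨σ, h1, h2⟩ := h
  exact ⟨G.map σ, by simp [RelOn.map, ← G.map_comp, h1], by simp [RelOn.map, ← G.map_comp, h2]⟩

lemma Transitive.map (h : ρ.Transitive) : (ρ.map adj).Transitive := by
  intro Z
  change ∀ a b : Z ⟶ G.obj ρ.R, a ≫ G.map ρ.r2 = b ≫ G.map ρ.r1 → _
  intro a b hab
  obtain ⟨t, ht1, ht2⟩ := h ((adj.homEquiv _ _).symm a) ((adj.homEquiv _ _).symm b) (by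
    rw [← adj.homEquiv_naturality_right_symm, ← adj.homEquiv_naturality_right_symm, hab])
  refine ⟨adj.homEquiv _ _ t, ?_, ?_⟩
  · change _ ≫ G.map ρ.r1 = a ≫ G.map ρ.r1
    rw [← adj.homEquiv_naturality_right, ht1, adj.homEquiv_naturality_right,
      Equiv.apply_symm_apply]
  · change _ ≫ G.map ρ.r2 = b ≫ G.map ρ.r2
    rw [← adj.homEquiv_naturality_right, ht2, adj.homEquiv_naturality_right,
      Equiv.apply_symm_apply]

lemma IsEquivalence.map (h : ρ.IsEquivalence) : (ρ.map adj).IsEquivalence :=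
  ⟨h.1.map adj, h.2.1.map adj, Transitive.map adj h.2.2⟩

lemma effective_iff {X : C} (ρ : RelOn X) :
    ρ.Effective ↔ ∃ (Z : C) (f : X ⟶ Z), IsKernelPair f ρ.r1 ρ.r2 :=
  ⟨fun ⟨Z, f, h, hl⟩ => ⟨Z, f, ⟨⟨h⟩, hl⟩⟩, fun ⟨Z, f, hf⟩ => ⟨Z, f, hf.w, hf.isLimit'⟩⟩

end RelOn

section Birkhoff

open ObjectProperty ZeroObject

def IsClosedUnderRegularQuotients (P : C → Prop) : Prop :=
  ∀ {A B : C} (f : A ⟶ B), Nonempty (RegularEpi f) → P A → P B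

variable {P : C → Prop}

lemma isZero_fullSubcategory_mk {Z : C} (hZ : IsZero Z) (hP : P Z) :
    IsZero (⟨Z, hP⟩ : FullSubcategory P) :=
  IsZero.of_full_of_faithful_of_isZero (ι P) _ hZ

lemma isZero_obj_of_isZero [HasZeroObject C] (hzero : ∀ {Z : C}, IsZero Z → P Z)
    {W : FullSubcategory P} (hW : IsZero W) : IsZero W.obj :=
  (isZero_zero C).of_iso
    ((ι P).mapIso (hW.iso (isZero_fullSubcategory_mk (isZero_zero C) (hzero (isZero_zero C)))))

lemma IsZeroMor.map_ι [HasZeroObject C] (hzero : ∀ {Z : C}, IsZero Z → P Z)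
    {A B : FullSubcategory P} {f : A ⟶ B} (hf : IsZeroMor f) : IsZeroMor ((ι P).map f) := by
  obtain ⟨Z, hZ, g, h, rfl⟩ := hf
  exact ⟨Z.obj, isZero_obj_of_isZero hzero hZ, g.hom, h.hom, rfl⟩

lemma hasZeroObject_fullSubcategory [HasZeroObject C] (hzero : ∀ {Z : C}, IsZero Z → P Z) :
    HasZeroObject (FullSubcategory P) :=
  ⟨⟨_, isZero_fullSubcategory_mk (isZero_zero C) (hzero (isZero_zero C))⟩⟩

variable {F : C ⥤ FullSubcategory P}

lemma prop_of_isZero (adj : F ⊣ ι P) (hsub : ∀ {A B : C} (f : A ⟶ B), Mono f → P B → P A) {Z : C}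
    (hZ : IsZero Z) : P Z :=
  hsub (adj.unit.app Z) ⟨fun g h _ => hZ.eq_of_tgt g h⟩ (F.obj Z).property

lemma IsZeroMor.homEquiv_symm (adj : F ⊣ ι P) (hzero : ∀ {Z : C}, IsZero Z → P Z) {Z : C}
    {B : FullSubcategory P} {u : Z ⟶ B.obj} (hu : IsZeroMor u) :
    IsZeroMor ((adj.homEquiv Z B).symm u) := by
  obtain ⟨Z₀, hZ₀, g, h, rfl⟩ := hu
  let Z₀' : FullSubcategory P := ⟨Z₀, hzero hZ₀⟩
  exact ⟨Z₀', isZero_fullSubcategory_mk hZ₀ _,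
    (adj.homEquiv Z Z₀').symm g, homMk h,
    adj.homEquiv_naturality_right_symm (Y := Z₀') g (homMk h)⟩

lemma IsKernelOf.map_ι [HasZeroObject C] (adj : F ⊣ ι P) (hzero : ∀ {Z : C}, IsZero Z → P Z)
    {A B K : FullSubcategory P} {κ : K ⟶ A} {α : A ⟶ B} (hκ : IsKernelOf κ α) :
    IsKernelOf ((ι P).map κ) ((ι P).map α) := by
  refine ⟨by simpa using hκ.1.map_ι hzero, fun {Z} g hg => ?_⟩
  have hg' : IsZeroMor ((adj.homEquiv Z A).symm g ≫ α) := by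
    rw [← adj.homEquiv_naturality_right_symm]
    exact hg.homEquiv_symm adj hzero
  obtain ⟨l, hl, hl_uniq⟩ := hκ.2 _ hg'
  refine ⟨adj.homEquiv Z K l, ?_, fun y (hy : y ≫ (ι P).map κ = g) => ?_⟩
  · change _ ≫ (ι P).map κ = g
    rw [← adj.homEquiv_naturality_right, hl, Equiv.apply_symm_apply]
  · rw [← hl_uniq ((adj.homEquiv Z K).symm y) ?_, Equiv.apply_symm_apply]
    change _ ≫ κ = _
    rw [← adj.homEquiv_naturality_right_symm, hy]

section Coequalizer

variable {R A : FullSubcategory P} (p₁ p₂ : R ⟶ A) [HasCoequalizer ((ι P).map p₁) ((ι P).map p₂)]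

noncomputable def coequalizerCofork (hquot : IsClosedUnderRegularQuotients P) : Cofork p₁ p₂ :=
  Cofork.ofπ (P := ⟨_, hquot _ ⟨coequalizerRegular _ _⟩ A.property⟩)
    (homMk (coequalizer.π ((ι P).map p₁) ((ι P).map p₂)))
    (InducedCategory.hom_ext (coequalizer.condition ((ι P).map p₁) ((ι P).map p₂)))

noncomputable def isColimitCoequalizerCofork (hquot : IsClosedUnderRegularQuotients P) :
    IsColimit (coequalizerCofork p₁ p₂ hquot) :=
  isColimitOfIsColimitCoforkMap (ι P) _ (coequalizerIsCoequalizer _ _)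

lemma preservesColimit_parallelPair (hquot : IsClosedUnderRegularQuotients P) :
    PreservesColimit (parallelPair p₁ p₂) (ι P) :=
  preservesColimit_of_preserves_colimit_cocone (isColimitCoequalizerCofork p₁ p₂ hquot)
    ((isColimitMapCoconeCoforkEquiv _ _).symm (coequalizerIsCoequalizer _ _))

end Coequalizer

lemma RelOn.Effective.of_map [RegularCat C] (hquot : IsClosedUnderRegularQuotients P)
    (adj : F ⊣ ι P) {A : FullSubcategory P} {ρ : RelOn A} (h : (ρ.map adj).Effective) :
    ρ.Effective := by
  obtain ⟨Y, φ, hφ⟩ := (RelOn.effective_iff _).1 h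
  change IsKernelPair φ ((ι P).map ρ.r1) ((ι P).map ρ.r2) at hφ
  have := RegularCat.hasCoeqOfKernelPair φ _ _ hφ.w hφ.isLimit'
  have hπ : IsKernelPair (coequalizer.π ((ι P).map ρ.r1) ((ι P).map ρ.r2))
      ((ι P).map ρ.r1) ((ι P).map ρ.r2) :=
    IsKernelPair.cancel_right (f₂ := coequalizer.desc φ hφ.w) (coequalizer.condition _ _)
      (by rwa [coequalizer.π_desc])
  let c := coequalizerCofork ρ.r1 ρ.r2 hquot
  exact (RelOn.effective_iff ρ).2 ⟨c.pt, c.π, IsPullback.of_map (ι P) c.condition hπ⟩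

variable [Reflective (ι P)]

noncomputable def regularEpiOfMapι [HasPullbacks C] {A B : FullSubcategory P} (f : A ⟶ B)
    (hf : RegularEpi ((ι P).map f)) : RegularEpi f :=
  haveI : HasPullbacks (FullSubcategory P) := hasLimitsOfShape_of_reflective (ι P)
  have k := IsKernelPair.of_hasPullback f
  Cofork.IsColimit.regularEpi
    (isColimitOfIsColimitCoforkMap (ι P) k.w (IsKernelPair.toCoequalizer (k.map (ι P)) hf))

noncomputable def regularEpiMapι [RegularCat C] (hquot : IsClosedUnderRegularQuotients P)
    {A B : FullSubcategory P} (f : A ⟶ B) (hf : RegularEpi f) : RegularEpi ((ι P).map f) :=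
  haveI : HasFiniteLimits C := RegularCat.hasFiniteLimits
  haveI : HasPullbacks (FullSubcategory P) := hasLimitsOfShape_of_reflective (ι P)
  have k := IsKernelPair.of_hasPullback f
  have kι := k.map (ι P)
  haveI := RegularCat.hasCoeqOfKernelPair _ _ _ kι.w kι.isLimit'
  haveI := preservesColimit_parallelPair (pullback.fst f f) (pullback.snd f f) hquot
  Cofork.IsColimit.regularEpi (isColimitCoforkMapOfIsColimit (ι P) k.w (k.toCoequalizer hf))

lemma regularCat_fullSubcategory [RegularCat C] (hquot : IsClosedUnderRegularQuotients P) :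
    RegularCat (FullSubcategory P) :=
  haveI : HasFiniteLimits C := RegularCat.hasFiniteLimits
  { hasFiniteLimits := ⟨fun _ _ _ => hasLimitsOfShape_of_reflective (ι P)⟩
    hasCoeqOfKernelPair := fun f p₁ p₂ h hl => by
      have k := IsPullback.map (ι P) (⟨⟨h⟩, hl⟩ : IsKernelPair f p₁ p₂)
      have := RegularCat.hasCoeqOfKernelPair _ _ _ k.w k.isLimit'
      exact HasColimit.mk ⟨_, isColimitCoequalizerCofork p₁ p₂ hquot⟩
    regEpiStable := fun f g p₁ p₂ h hl ⟨hf⟩ => by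
      have pb := IsPullback.map (ι P) ⟨⟨h⟩, hl⟩
      obtain ⟨hp⟩ := RegularCat.regEpiStable _ _ _ _ pb.w pb.isLimit' ⟨regularEpiMapι hquot f hf⟩
      exact ⟨regularEpiOfMapι p₂ hp⟩ }

lemma exactCat_fullSubcategory [ExactCat C] (hquot : IsClosedUnderRegularQuotients P) :
    ExactCat (FullSubcategory P) :=
  { regularCat_fullSubcategory hquot with
    effective := fun _ hρ =>
      .of_map hquot (reflectorAdjunction (ι P)) (ExactCat.effective _ (hρ.map _)) }

lemma isIso_of_splitShortFive_fullSubcategory [SemiAbelian C] [HasZeroObject C]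
    (hzero : ∀ {Z : C}, IsZero Z → P Z) {A B B' Q : FullSubcategory P} (k : A ⟶ B) (p : B ⟶ Q)
    (s : Q ⟶ B) (k' : A ⟶ B') (p' : B' ⟶ Q) (s' : Q ⟶ B') (b : B ⟶ B') (hs : s ≫ p = 𝟙 Q)
    (hs' : s' ≫ p' = 𝟙 Q) (hk : IsKernelOf k p) (hk' : IsKernelOf k' p') (hkb : k ≫ b = k')
    (hbp : b ≫ p' = p) (hsb : s ≫ b = s') : IsIso b := by
  have hιb : IsIso ((ι P).map b) := SemiAbelian.ssfl ((ι P).map k) ((ι P).map p) ((ι P).map s) ((ι P).map k')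
    ((ι P).map p') ((ι P).map s') ((ι P).map b)
    (by rw [← (ι P).map_comp, hs, (ι P).map_id]) (by rw [← (ι P).map_comp, hs', (ι P).map_id])
    (hk.map_ι (reflectorAdjunction (ι P)) hzero) (hk'.map_ι (reflectorAdjunction (ι P)) hzero)
    (by rw [← (ι P).map_comp, hkb]) (by rw [← (ι P).map_comp, hbp])
    (by rw [← (ι P).map_comp, hsb])
  exact isIso_of_reflects_iso b (ι P)

end Birkhoff

theorem stmt19_general {C : Type u} [Category.{v} C] [SemiAbelian C]
    (P : C → Prop) [Reflective (ObjectProperty.ι P)]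
    (hsub : ∀ {A B : C} (f : A ⟶ B), Mono f → P B → P A)
    (hquot : ∀ {A B : C} (f : A ⟶ B), Nonempty (RegularEpi f) → P A → P B) :
    SemiAbelian (ObjectProperty.FullSubcategory P) := by
  have : HasZeroObject C := SemiAbelian.hasZeroObject
  have : HasBinaryCoproducts C := SemiAbelian.hasBinaryCoproducts
  have hzero : ∀ {Z : C}, IsZero Z → P Z :=
    prop_of_isZero (reflectorAdjunction (ObjectProperty.ι P)) hsub
  exact
    { exactCat_fullSubcategory hquot with
      hasZeroObject := hasZeroObject_fullSubcategory hzero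
      hasBinaryCoproducts := hasColimitsOfShape_of_reflective (ObjectProperty.ι P)
      ssfl := isIso_of_splitShortFive_fullSubcategory hzero }

/-- A Birkhoff subcategory of a semi-abelian category is semi-abelian. -/
theorem stmt19 {C : Type u} [Category.{v} C] [SemiAbelian C]
    (P : C → Prop) [Reflective (ObjectProperty.ι P)]
    (hrep : ∀ {A B : C}, P A → (A ≅ B) → P B)
    (hsub : ∀ {A B : C} (f : A ⟶ B), Mono f → P B → P A)
    (hquot : ∀ {A B : C} (f : A ⟶ B), Nonempty (RegularEpi f) → P A → P B) :
    SemiAbelian (ObjectProperty.FullSubcategory P) :=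
  stmt19_general P hsub hquot
end
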